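/- Let d ≥ 1, α > 0, and let f, c : ℝ^d → ℂ be Schwartz functions satisfying −Δc + α² c = α² f on ℝ^d. Then ‖α²(c − f) − Δf‖_{L²(ℝ^d)} ≤ α^{-2} ‖Δ(Δf)‖_{L²(ℝ^d)}. -/

import Mathlib

/-!
Put `w = Δ(c - f) = α²(c - f) - Δf`. Applying `Δ` to `Δc = α²(c - f)` gives `α²w - Δw = ΔΔf`.
Integration by parts shows `⟪w, Δw⟫_{L²} = -∑ᵢ ‖∂ᵢw‖² ≤ 0`, so testing this equation against `w`
yields `α²‖w‖² ≤ ⟪w, ΔΔf⟫ ≤ ‖w‖ ‖ΔΔf‖`, i.e. `‖w‖ ≤ α⁻² ‖ΔΔf‖`.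
-/

open MeasureTheory

/-- The Laplacian `Δg = Σ_k ∂²g/∂x_k²` on `ℝ^d`. -/
noncomputable def lap {d : ℕ} {F : Type*} [NormedAddCommGroup F] [NormedSpace ℝ F]
    (g : EuclideanSpace ℝ (Fin d) → F) (x : EuclideanSpace ℝ (Fin d)) : F :=
  ∑ i : Fin d,
    fderiv ℝ (fun y => fderiv ℝ g y (EuclideanSpace.single i 1)) x (EuclideanSpace.single i 1)

open SchwartzMap Laplacian LineDeriv
open scoped RealInnerProductSpace

theorem norm_le_inv_mul_norm_of_mul_norm_sq_le_inner {H : Type*} [NormedAddCommGroup H]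
    [InnerProductSpace ℝ H] {β : ℝ} (hβ : 0 < β) {w h : H} (hwh : β * ‖w‖ ^ 2 ≤ ⟪w, h⟫) :
    ‖w‖ ≤ β⁻¹ * ‖h‖ := by
  rw [le_inv_mul_iff₀ hβ]
  rcases (norm_nonneg w).eq_or_lt with hw | hw
  · rw [← hw, mul_zero]
    exact norm_nonneg h
  · refine le_of_mul_le_mul_right ?_ hw
    calc β * ‖w‖ * ‖w‖ = β * ‖w‖ ^ 2 := by ring
      _ ≤ ⟪w, h⟫ := hwh
      _ ≤ ‖h‖ * ‖w‖ := (real_inner_le_norm w h).trans_eq (mul_comm _ _)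

namespace SchwartzMap

section Laplacian

variable {E F : Type*} [NormedAddCommGroup E] [InnerProductSpace ℝ E] [FiniteDimensional ℝ E]
  [NormedAddCommGroup F] [NormedSpace ℝ F]

theorem laplacian_sub (f g : 𝓢(E, F)) : (Δ (f - g) : 𝓢(E, F)) = Δ f - Δ g := by
  simp only [← laplacianCLM_eq', map_sub]

theorem laplacian_smul (a : ℝ) (f : 𝓢(E, F)) : (Δ (a • f) : 𝓢(E, F)) = a • Δ f := by
  simp only [← laplacianCLM_eq', map_smul]

end Laplacian

section Energy

variable {E V : Type*} [NormedAddCommGroup E] [InnerProductSpace ℝ E] [FiniteDimensional ℝ E]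
  [MeasurableSpace E] [BorelSpace E] {μ : Measure E} [μ.IsAddHaarMeasure]
  [NormedAddCommGroup V] [InnerProductSpace ℝ V]

theorem integrable_inner (f g : 𝓢(E, V)) : Integrable (fun x => ⟪f x, g x⟫) μ :=
  (pairing (innerSL ℝ) f g).integrable

theorem integral_inner_lineDerivOp_lineDerivOp (g : 𝓢(E, V)) (v : E) :
    ∫ x, ⟪g x, ∂_{v} (∂_{v} g) x⟫ ∂μ = -∫ x, ‖∂_{v} g x‖ ^ 2 ∂μ := by
  rw [← integral_congr_ae (ae_of_all μ fun x => real_inner_self_eq_norm_sq (∂_{v} g x))]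
  exact integral_bilinear_lineDerivOp_right_eq_neg_left g (∂_{v} g) (innerSL ℝ) v

theorem integral_inner_laplacian_self_nonpos (g : 𝓢(E, V)) :
    ∫ x, ⟪g x, Δ g x⟫ ∂μ ≤ 0 := by
  simp_rw [laplacian_eq_sum (stdOrthonormalBasis ℝ E), sum_apply, inner_sum]
  rw [integral_finsetSum _ fun i _ => integrable_inner g _]
  simp only [integral_inner_lineDerivOp_lineDerivOp]
  exact Finset.sum_nonpos fun i _ => neg_nonpos.2 (integral_nonneg fun x => sq_nonneg _)

theorem real_inner_toL2_toL2_eq (f g : 𝓢(E, V)) :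
    ⟪f.toLp 2 μ, g.toLp 2 μ⟫ = ∫ x, ⟪f x, g x⟫ ∂μ := by
  rw [L2.inner_def]
  refine integral_congr_ae ?_
  filter_upwards [f.coeFn_toLp 2 μ, g.coeFn_toLp 2 μ] with x hf hg
  rw [hf, hg]

theorem eLpNorm_le_inv_mul_eLpNorm_smul_sub_laplacian (w : 𝓢(E, V)) {β : ℝ} (hβ : 0 < β) :
    eLpNorm w 2 μ ≤ ENNReal.ofReal β⁻¹ * eLpNorm ⇑(β • w - Δ w) 2 μ := by
  have hcoercive : β * ‖w.toLp 2 μ‖ ^ 2 ≤ ⟪w.toLp 2 μ, (β • w - Δ w).toLp 2 μ⟫ := by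
    have hlin := map_sub (toLpCLM ℝ V 2 μ) (β • w) (Δ w)
    simp only [map_smul, toLpCLM_apply] at hlin
    rw [hlin, inner_sub_right, real_inner_smul_right, real_inner_self_eq_norm_sq,
      real_inner_toL2_toL2_eq]
    linarith [integral_inner_laplacian_self_nonpos (μ := μ) w]
  have hnorm (g : 𝓢(E, V)) : eLpNorm g 2 μ = ENNReal.ofReal ‖g.toLp 2 μ‖ := by
    rw [norm_toLp, ENNReal.ofReal_toReal (g.eLpNorm_lt_top 2 μ).ne]
  rw [hnorm, hnorm, ← ENNReal.ofReal_mul (inv_nonneg.2 hβ.le)]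
  exact ENNReal.ofReal_le_ofReal (norm_le_inv_mul_norm_of_mul_norm_sq_le_inner hβ hcoercive)

end Energy

theorem lap_eq_laplacian {d : ℕ} {F : Type*} [NormedAddCommGroup F] [NormedSpace ℝ F]
    (g : 𝓢(EuclideanSpace ℝ (Fin d), F)) : lap ⇑g = ⇑(Δ g : 𝓢(EuclideanSpace ℝ (Fin d), F)) := by
  have hderiv (v : EuclideanSpace ℝ (Fin d)) :
      ⇑(∂_{v} g : 𝓢(_, F)) = fun y => fderiv ℝ g y v :=
    funext (lineDerivOp_apply_eq_fderiv v g)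
  ext x
  simp [lap, laplacian_eq_sum (EuclideanSpace.basisFun (Fin d) ℝ), lineDerivOp_apply_eq_fderiv,
    hderiv]

end SchwartzMap

theorem order_parameter_capillary_close_to_laplacian_general (d : ℕ) (α : ℝ) (hα : 0 < α)
    (f c : SchwartzMap (EuclideanSpace ℝ (Fin d)) ℂ)
    (heq : ∀ x, -lap (⇑c) x + (α : ℂ) ^ 2 * c x = (α : ℂ) ^ 2 * f x) :
    eLpNorm (fun x => (α : ℂ) ^ 2 * (c x - f x) - lap (⇑f) x) 2 volume ≤
      ENNReal.ofReal (α ^ 2)⁻¹ * eLpNorm (lap (lap (⇑f))) 2 volume := by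
  have hΔc : (Δ c : 𝓢(_, ℂ)) = α ^ 2 • (c - f) := by
    ext x
    rw [← lap_eq_laplacian]
    simp only [smul_apply, sub_apply, Complex.real_smul, Complex.ofReal_pow]
    linear_combination -heq x
  set w : 𝓢(_, ℂ) := Δ c - Δ f
  have hw : (fun x => (α : ℂ) ^ 2 * (c x - f x) - lap (⇑f) x) = ⇑w := by
    ext x
    simp [w, hΔc, lap_eq_laplacian]
  have hΔw : α ^ 2 • w - Δ w = Δ (Δ f) := by
    simp only [w, laplacian_sub, laplacian_smul, hΔc]
    abel
  rw [hw, lap_eq_laplacian, lap_eq_laplacian, ← hΔw]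
  exact w.eLpNorm_le_inv_mul_eLpNorm_smul_sub_laplacian (by positivity)

theorem order_parameter_capillary_close_to_laplacian (d : ℕ) (hd : 1 ≤ d) (α : ℝ) (hα : 0 < α)
    (f c : SchwartzMap (EuclideanSpace ℝ (Fin d)) ℂ)
    (heq : ∀ x, -lap (⇑c) x + (α : ℂ) ^ 2 * c x = (α : ℂ) ^ 2 * f x) :
    eLpNorm (fun x => (α : ℂ) ^ 2 * (c x - f x) - lap (⇑f) x) 2 volume ≤
      ENNReal.ofReal (α ^ 2)⁻¹ * eLpNorm (lap (lap (⇑f))) 2 volume :=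
  order_parameter_capillary_close_to_laplacian_general d α hα f c heq
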